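/- Let n be a positive integer, s a non-negative integer, and p a prime with p > 2 and p | n·(s+1). Set u = ν_p(C(n+s,s)) and let z₀ be the unique integer with 1 ≤ z₀ < p and z₀ ≡ n+s (mod p). If u > 0, (u+1)/p < 1 and (ν_p(n+s−z₀) − ν_p(n))/(z₀+1) < 1, then g₁(x) = g₁(x,n,s) has no factor of degree 1 in ℚ[x]. -/

import Mathlib

open Polynomial Finset

/-- g₁(x,n,s) = n!·∑_{j=0}^{n} C(n+s−j, n−j)·x^j/j!, as a polynomial over ℚ. -/
noncomputable def g1 (n s : ℕ) : ℚ[X] :=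
  (n.factorial : ℚ[X]) *
    ∑ j ∈ Finset.range (n + 1),
      Polynomial.C (((n + s - j).choose (n - j) : ℚ) / (j.factorial : ℚ)) * Polynomial.X ^ j

/-!
A linear factor of the monic integer polynomial `g₁ = ∑ aⱼ xʲ` gives an integer root `m`.
Since `p ∣ n (s + 1)`, every `aⱼ` with `j < n` is divisible by `p`, so reducing mod `p` gives
`p ∣ m`. On the other hand `aⱼ · (n+s)(n+s-1)⋯(n+s-j+1) = C(n,j) · a₀`, and the hypotheses give
`ν_p(a₀) < ν_p(aⱼ) + j` for `1 ≤ j ≤ n`: for `j < p` at most one factor of the falling factorial,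
namely `n + s - z₀`, is divisible by `p`, and `ν_p(C(n,j)) ≥ ν_p(n)`; for `j ≥ p` Legendre's
bound on `ν_p(j!)` suffices. So in `∑ aⱼ mʲ = 0` the term `a₀` has strictly smaller `p`-adic
valuation than all the others, a contradiction.
-/

namespace Polynomial

theorem Monic.exists_eval_eq_zero_of_dvd_map {f : ℤ[X]} (hf : f.Monic) {q : ℚ[X]}
    (hq : q.natDegree = 1) (hdvd : q ∣ f.map (Int.castRingHom ℚ)) : ∃ m : ℤ, f.eval m = 0 := by
  obtain ⟨r, hr⟩ := exists_root_of_degree_eq_one (degree_eq_iff_natDegree_eq_of_pos one_pos |>.2 hq)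
  have hfr : aeval r f = 0 := by
    obtain ⟨w, hw⟩ := hdvd
    rw [aeval_def, eval₂_eq_eval_map, algebraMap_int_eq, hw, eval_mul, hr.eq_zero, zero_mul]
  obtain ⟨m, rfl⟩ := isInteger_of_is_root_of_monic hf hfr
  refine ⟨m, Int.cast_injective (α := ℚ) ?_⟩
  rw [Int.cast_zero, ← hfr, aeval_algebraMap_apply, coe_aeval_eq_eval]
  rfl

theorem Monic.prime_dvd_of_eval_eq_zero {p : ℕ} [Fact p.Prime] {f : ℤ[X]} (hf : f.Monic)
    (hcoeff : ∀ j < f.natDegree, (p : ℤ) ∣ f.coeff j) {m : ℤ} (hm : f.eval m = 0) :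
    (p : ℤ) ∣ m := by
  have hmap : f.map (Int.castRingHom (ZMod p)) = X ^ f.natDegree := by
    ext j
    rw [coeff_map, coeff_X_pow]
    rcases lt_trichotomy j f.natDegree with hj | rfl | hj
    · simpa [hj.ne] using (ZMod.intCast_zmod_eq_zero_iff_dvd _ p).2 (hcoeff j hj)
    · simp [hf.coeff_natDegree]
    · simp [hj.ne', coeff_eq_zero_of_natDegree_lt hj]
  have hpow : (m : ZMod p) ^ f.natDegree = 0 := by
    rw [← eval_X (x := (m : ZMod p)), ← eval_pow, ← hmap, eval_intCast_map, Int.cast_id, hm,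
      map_zero]
  exact (ZMod.intCast_zmod_eq_zero_iff_dvd m p).1 (eq_zero_of_pow_eq_zero hpow)

theorem eval_ne_zero_of_padicValInt_coeff_zero_lt {p : ℕ} [Fact p.Prime] {f : ℤ[X]}
    (h0 : f.coeff 0 ≠ 0)
    (h : ∀ j, 0 < j → f.coeff j ≠ 0 → padicValInt p (f.coeff 0) < padicValInt p (f.coeff j) + j)
    {m : ℤ} (hm : (p : ℤ) ∣ m) : f.eval m ≠ 0 := by
  set v := padicValInt p (f.coeff 0)
  have hterm : ∀ j ∈ range f.natDegree, (p : ℤ) ^ (v + 1) ∣ f.coeff (j + 1) * m ^ (j + 1) := by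
    intro j _
    by_cases hc : f.coeff (j + 1) = 0
    · simp [hc]
    · refine (pow_dvd_pow _ (h (j + 1) j.succ_pos hc)).trans ?_
      rw [pow_add]
      exact mul_dvd_mul (padicValInt_dvd _) (pow_dvd_pow_of_dvd hm _)
  intro heval
  rw [eval_eq_sum_range, sum_range_succ', pow_zero, mul_one] at heval
  have hdvd : (p : ℤ) ^ (v + 1) ∣ f.coeff 0 := by
    rw [eq_neg_of_add_eq_zero_right heval]
    exact (dvd_sum hterm).neg_right
  have := (padicValInt_dvd_iff _ _).1 hdvd
  omega

end Polynomial

section PadicValNat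
variable {p : ℕ} [Fact p.Prime]

theorem padicValNat_descFactorial_of_modEq {N z j : ℕ} (hz : z < p) (hzN : z ≡ N [MOD p])
    (hjp : j ≤ p) (hjN : j ≤ N) :
    padicValNat p (N.descFactorial j) = if z < j then padicValNat p (N - z) else 0 := by
  induction j with
  | zero => simp
  | succ j ih =>
    rw [Nat.descFactorial_succ, padicValNat.mul (by omega) (Nat.descFactorial_pos.2 (by omega)).ne',
      ih (by omega) (by omega)]
    rcases eq_or_ne j z with rfl | hjz
    · simp
    · have hndvd : ¬ p ∣ N - j := fun h =>
        hjz ((((Nat.modEq_iff_dvd' (by omega)).2 h).trans hzN.symm).eq_of_lt_of_lt (by omega) hz)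
      rw [padicValNat.eq_zero_of_not_dvd hndvd, zero_add]
      exact if_congr (by omega) rfl rfl

theorem padicValNat_le_padicValNat_choose {n j : ℕ} (hj : 0 < j) (hjp : j < p) (hjn : j ≤ n) :
    padicValNat p n ≤ padicValNat p (n.choose j) := by
  obtain ⟨n, rfl⟩ : ∃ n', n = n' + 1 := ⟨n - 1, by omega⟩
  obtain ⟨j, rfl⟩ : ∃ j', j = j' + 1 := ⟨j - 1, by omega⟩
  have hndvd : ¬ p ∣ j + 1 := fun h => by have := Nat.le_of_dvd j.succ_pos h; omega
  have h := congrArg (padicValNat p) (Nat.add_one_mul_choose_eq n j)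
  rw [padicValNat.mul (by omega) (Nat.choose_pos (by omega)).ne',
    padicValNat.mul (Nat.choose_pos (by omega)).ne' (by omega),
    padicValNat.eq_zero_of_not_dvd hndvd] at h
  omega

end PadicValNat

theorem Nat.descFactorial_mul_choose_sub {N n j : ℕ} (hjn : j ≤ n) :
    N.descFactorial j * (N - j).choose (n - j) = j.factorial * (N.choose n * n.choose j) := by
  rw [Nat.choose_mul hjn, Nat.descFactorial_eq_factorial_mul_choose, mul_assoc]

def g1Coeff (n s j : ℕ) : ℕ := n.choose j * (s + 1).ascFactorial (n - j)

noncomputable def g1Int (n s : ℕ) : ℤ[X] := ∑ j ∈ range (n + 1), C (g1Coeff n s j : ℤ) * X ^ j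

section g1Coeff
variable {n s j : ℕ}

theorem g1Coeff_pos (hjn : j ≤ n) : 0 < g1Coeff n s j :=
  Nat.mul_pos (Nat.choose_pos hjn) (Nat.ascFactorial_pos s _)

theorem g1Coeff_eq_descFactorial_mul_choose (hjn : j ≤ n) :
    g1Coeff n s j = n.descFactorial (n - j) * (n + s - j).choose (n - j) := by
  rw [g1Coeff, Nat.ascFactorial_eq_factorial_mul_choose, Nat.descFactorial_eq_factorial_mul_choose,
    Nat.choose_symm hjn, show s + (n - j) = n + s - j by omega]
  ring

theorem g1Coeff_mul_descFactorial (hjn : j ≤ n) :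
    g1Coeff n s j * (n + s).descFactorial j = n.choose j * g1Coeff n s 0 := by
  rw [g1Coeff, g1Coeff, Nat.choose_zero_right, one_mul, Nat.sub_zero, mul_assoc,
    show n + s = s + (n - j) + j by omega, Nat.add_descFactorial_eq_ascFactorial,
    show s + (n - j) + 1 = s + 1 + (n - j) by omega, Nat.ascFactorial_mul_ascFactorial,
    Nat.sub_add_cancel hjn]

theorem Nat.Prime.dvd_g1Coeff {p : ℕ} (hp : p.Prime) (hpdvd : p ∣ n * (s + 1)) (hj : j < n) :
    p ∣ g1Coeff n s j := by
  obtain ⟨k, hk⟩ : ∃ k, n - j = k + 1 := ⟨n - j - 1, by omega⟩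
  rcases hp.dvd_mul.1 hpdvd with hn | hs
  · obtain ⟨n', rfl⟩ : ∃ n', n = n' + 1 := ⟨n - 1, by omega⟩
    rw [g1Coeff_eq_descFactorial_mul_choose hj.le, hk, Nat.succ_descFactorial_succ, mul_assoc]
    exact hn.mul_right _
  · have hasc : (s + 1).ascFactorial (k + 1) = (s + 1) * (s + 2).ascFactorial k := by
      rw [add_comm k 1, ← Nat.ascFactorial_mul_ascFactorial]
      simp [Nat.ascFactorial_succ]
    rw [g1Coeff, hk, hasc]
    exact (hs.mul_right _).mul_left _

end g1Coeff

theorem g1_eq_map (n s : ℕ) : g1 n s = (g1Int n s).map (Int.castRingHom ℚ) := by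
  simp only [g1, g1Int, Polynomial.map_sum, Polynomial.map_mul, Polynomial.map_pow, map_X, map_C,
    mul_sum]
  refine sum_congr rfl fun j hj => ?_
  have hjn : j ≤ n := Nat.lt_succ_iff.1 (mem_range.1 hj)
  have hfac := Nat.factorial_mul_descFactorial (Nat.sub_le n j)
  rw [Nat.sub_sub_self hjn] at hfac
  have hcoeff : (n.factorial : ℚ) * ((n + s - j).choose (n - j) / j.factorial) = g1Coeff n s j := by
    rw [g1Coeff_eq_descFactorial_mul_choose hjn, ← hfac]
    push_cast
    field_simp
  rw [← C_eq_natCast, ← mul_assoc, ← C_mul, hcoeff]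
  simp

theorem coeff_g1Int (n s j : ℕ) :
    (g1Int n s).coeff j = if j ≤ n then (g1Coeff n s j : ℤ) else 0 := by
  simp only [g1Int, C_mul_X_pow_eq_monomial, finsetSum_coeff, coeff_monomial, sum_ite_eq',
    mem_range, Nat.lt_succ_iff]

theorem g1Int_monic (n s : ℕ) : (g1Int n s).Monic := by
  refine monic_of_natDegree_le_of_coeff_eq_one n ?_ ?_
  · exact natDegree_sum_le_of_forall_le _ _ fun j hj =>
      (natDegree_C_mul_X_pow_le _ _).trans (Nat.lt_succ_iff.1 (mem_range.1 hj))
  · simp [coeff_g1Int, g1Coeff]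

theorem natDegree_g1Int (n s : ℕ) : (g1Int n s).natDegree = n :=
  natDegree_eq_of_le_of_coeff_ne_zero
    (natDegree_sum_le_of_forall_le _ _ fun j hj =>
      (natDegree_C_mul_X_pow_le _ _).trans (Nat.lt_succ_iff.1 (mem_range.1 hj)))
    (by simp [coeff_g1Int, g1Coeff])

section Valuation
variable {p : ℕ} [Fact p.Prime]

theorem padicValNat_descFactorial_lt {n s z j : ℕ} (hz : z < p) (hzN : z ≡ n + s [MOD p])
    (hu : padicValNat p ((n + s).choose s) + 1 < p)
    (he : padicValNat p (n + s - z) ≤ z + padicValNat p n) (hj : 0 < j) (hjn : j ≤ n) :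
    padicValNat p ((n + s).descFactorial j) < padicValNat p (n.choose j) + j := by
  rcases lt_or_ge j p with hjp | hpj
  · rw [padicValNat_descFactorial_of_modEq hz hzN hjp.le (by omega)]
    split_ifs
    · have := padicValNat_le_padicValNat_choose hj hjp hjn
      omega
    · omega
  · have hid := congrArg (padicValNat p) (Nat.descFactorial_mul_choose_sub (N := n + s) hjn)
    rw [padicValNat.mul (Nat.descFactorial_pos.2 (by omega)).ne' (Nat.choose_pos (by omega)).ne',
      padicValNat.mul (Nat.factorial_pos j).ne'
        (Nat.mul_pos (Nat.choose_pos (by omega)) (Nat.choose_pos hjn)).ne',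
      padicValNat.mul (Nat.choose_pos (by omega)).ne' (Nat.choose_pos hjn).ne',
      Nat.choose_symm_add] at hid
    have hfac : padicValNat p j.factorial + padicValNat p ((n + s).choose s) < j := by
      -- Legendre: `(p - 1) ν_p(j!) < j`, and `ν_p(C(n+s,s)) ≤ p - 2` while `p ≤ j`.
      have hleg := sub_one_mul_padicValNat_factorial_lt_of_ne_zero p hj.ne'
      generalize padicValNat p j.factorial = F at hleg ⊢
      generalize padicValNat p ((n + s).choose s) = u at hu ⊢
      obtain ⟨q, rfl⟩ : ∃ q, p = q + 2 := ⟨p - 2, by have := (Fact.out : p.Prime).two_le; omega⟩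
      rw [show q + 2 - 1 = q + 1 by omega] at hleg
      nlinarith
    omega

theorem padicValNat_g1Coeff_zero_lt {n s z j : ℕ} (hz : z < p) (hzN : z ≡ n + s [MOD p])
    (hu : padicValNat p ((n + s).choose s) + 1 < p)
    (he : padicValNat p (n + s - z) ≤ z + padicValNat p n) (hj : 0 < j) (hjn : j ≤ n) :
    padicValNat p (g1Coeff n s 0) < padicValNat p (g1Coeff n s j) + j := by
  have hid := congrArg (padicValNat p) (g1Coeff_mul_descFactorial (s := s) hjn)
  rw [padicValNat.mul (g1Coeff_pos hjn).ne' (Nat.descFactorial_pos.2 (by omega)).ne',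
    padicValNat.mul (Nat.choose_pos hjn).ne' (g1Coeff_pos n.zero_le).ne'] at hid
  have := padicValNat_descFactorial_lt hz hzN hu he hj hjn
  omega

end Valuation

theorem coeff_g1Int_zero_ne_zero (n s : ℕ) : (g1Int n s).coeff 0 ≠ 0 := by
  simp [coeff_g1Int, (g1Coeff_pos (s := s) n.zero_le).ne']

theorem Nat.Prime.dvd_coeff_g1Int {p n s j : ℕ} (hp : p.Prime) (hpdvd : p ∣ n * (s + 1))
    (hj : j < (g1Int n s).natDegree) : (p : ℤ) ∣ (g1Int n s).coeff j := by
  rw [natDegree_g1Int] at hj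
  rw [coeff_g1Int, if_pos hj.le]
  exact Int.natCast_dvd_natCast.2 (hp.dvd_g1Coeff hpdvd hj)

theorem padicValInt_coeff_g1Int_zero_lt {p n s z j : ℕ} [Fact p.Prime] (hz : z < p)
    (hzN : z ≡ n + s [MOD p]) (hu : padicValNat p ((n + s).choose s) + 1 < p)
    (he : padicValNat p (n + s - z) ≤ z + padicValNat p n) (hj : 0 < j)
    (hc : (g1Int n s).coeff j ≠ 0) :
    padicValInt p ((g1Int n s).coeff 0) < padicValInt p ((g1Int n s).coeff j) + j := by
  have hjn : j ≤ n := by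
    by_contra h
    simp [coeff_g1Int, h] at hc
  rw [coeff_g1Int, coeff_g1Int, if_pos n.zero_le, if_pos hjn, padicValInt.of_nat,
    padicValInt.of_nat]
  exact_mod_cast padicValNat_g1Coeff_zero_lt hz hzN hu he hj hjn

theorem g1_no_linear_factor_of_u_pos_general (n s : ℕ)
    (p : ℕ) (hp : p.Prime) (hpdvd : p ∣ n * (s + 1))
    (u : ℕ) (hu_def : u = padicValNat p ((n + s).choose s))
    (z₀ : ℕ) (hz₀p : z₀ < p) (hz₀ : (z₀ : ZMod p) = ((n + s : ℕ) : ZMod p))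
    (h1 : ((u : ℚ) + 1) / (p : ℚ) < 1)
    (h2 : ((padicValNat p (n + s - z₀) : ℚ) - (padicValNat p n : ℚ)) / ((z₀ : ℚ) + 1) < 1) :
    ¬ ∃ q : ℚ[X], q.natDegree = 1 ∧ q ∣ g1 n s := by
  have := Fact.mk hp
  subst hu_def
  rintro ⟨q, hq, hdvd⟩
  have hmod : z₀ ≡ n + s [MOD p] := (ZMod.natCast_eq_natCast_iff _ _ _).1 hz₀
  have hu : padicValNat p ((n + s).choose s) + 1 < p := by
    rw [div_lt_one (by exact_mod_cast hp.pos)] at h1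
    exact_mod_cast h1
  have he : padicValNat p (n + s - z₀) ≤ z₀ + padicValNat p n := by
    rw [div_lt_one (by positivity), sub_lt_iff_lt_add] at h2
    have : padicValNat p (n + s - z₀) < z₀ + 1 + padicValNat p n := by exact_mod_cast h2
    omega
  obtain ⟨m, hm⟩ := (g1Int_monic n s).exists_eval_eq_zero_of_dvd_map hq (g1_eq_map n s ▸ hdvd)
  have hpm : (p : ℤ) ∣ m :=
    (g1Int_monic n s).prime_dvd_of_eval_eq_zero (fun _ hj => hp.dvd_coeff_g1Int hpdvd hj) hm
  exact eval_ne_zero_of_padicValInt_coeff_zero_lt (coeff_g1Int_zero_ne_zero n s)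
    (fun _ hj hc => padicValInt_coeff_g1Int_zero_lt hz₀p hmod hu he hj hc) hpm hm

theorem g1_no_linear_factor_of_u_pos (n s : ℕ) (hn : 1 ≤ n)
    (p : ℕ) (hp : p.Prime) (hp2 : 2 < p) (hpdvd : p ∣ n * (s + 1))
    (u : ℕ) (hu_def : u = padicValNat p ((n + s).choose s)) (hu : 0 < u)
    (z₀ : ℕ) (hz₀1 : 1 ≤ z₀) (hz₀p : z₀ < p) (hz₀ : (z₀ : ZMod p) = ((n + s : ℕ) : ZMod p))
    (h1 : ((u : ℚ) + 1) / (p : ℚ) < 1)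
    (h2 : ((padicValNat p (n + s - z₀) : ℚ) - (padicValNat p n : ℚ)) / ((z₀ : ℚ) + 1) < 1) :
    ¬ ∃ q : ℚ[X], q.natDegree = 1 ∧ q ∣ g1 n s :=
  g1_no_linear_factor_of_u_pos_general n s p hp hpdvd u hu_def z₀ hz₀p hz₀ h1 h2
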